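/- arXiv:1909.02413 — 3 statements merged into one kernel-verified Lean document; each statement's English description precedes it below -/
import Mathlib

section
/- Let n ≥ 1 and let c₀, c₁, …, c_{n−1} ∈ ℤ[H] satisfy Σ_{i=0}^{n−1} W_i·c_i = 0 in ℤ[H] ⊕ ℤ[H]. Then c_{n−1} belongs to the right ideal of ℤ[H] generated by z₀, z₋₁, …, z_{1−n}. -/
open Finsupp Multiplicative

/-- The shift automorphism of the free abelian group `ℤ →₀ ℤ`, sending the basis element
`single n 1` (i.e. `x_n`) to `single (n + 1) 1` (i.e. `x_{n+1}`). -/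
noncomputable def shiftAut : Multiplicative (ℤ →₀ ℤ) ≃* Multiplicative (ℤ →₀ ℤ) :=
  AddEquiv.toMultiplicative (Finsupp.domCongr (Equiv.addRight (1 : ℤ)))

/-- The action of `ℤ` on the free abelian group `ℤ →₀ ℤ` by shifting. -/
noncomputable def shiftHom : Multiplicative ℤ →* MulAut (Multiplicative (ℤ →₀ ℤ)) :=
  zpowersHom _ (shiftAut : MulAut (Multiplicative (ℤ →₀ ℤ)))

/-- The wreath product `H = ℤ ≀ ℤ`: the semidirect product of the free abelian group `N`
with basis `{x_n : n ∈ ℤ}` (multiplicative `ℤ →₀ ℤ`) by an infinite cyclic group `⟨t⟩`,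
where conjugation by `t` sends `x_n` to `x_{n+1}`. -/
noncomputable abbrev Hgrp : Type :=
  Multiplicative (ℤ →₀ ℤ) ⋊[shiftHom] Multiplicative ℤ

/-- The element `x_n = tⁿ x t⁻ⁿ` of `H`. -/
noncomputable def xE (n : ℤ) : Hgrp :=
  SemidirectProduct.inl (Multiplicative.ofAdd (Finsupp.single n 1))

/-- The element `t` of `H`. -/
noncomputable def tE : Hgrp :=
  SemidirectProduct.inr (Multiplicative.ofAdd 1)

/-- The integral group ring `ℤ[H]`. -/
noncomputable abbrev Agr : Type := MonoidAlgebra ℤ Hgrp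

/-- The element `x_i ∈ ℤ[H]`. -/
noncomputable def XA (i : ℤ) : Agr := MonoidAlgebra.of ℤ Hgrp (xE i)

/-- The element `t ∈ ℤ[H]`. -/
noncomputable def TA : Agr := MonoidAlgebra.of ℤ Hgrp tE

/-- `y_i = 1 - x_i`. -/
noncomputable def yA (i : ℤ) : Agr := 1 - XA i

/-- `z_i = x_{i-1} - x_i`. -/
noncomputable def zA (i : ℤ) : Agr := XA (i - 1) - XA i

/-- The product `y₀ y₋₁ ⋯ y_k` (equal to `1` when `k > 0`). -/
noncomputable def yProd (k : ℤ) : Agr :=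
  ((List.range (1 - k).toNat).map (fun i => yA (-(i : ℤ)))).prod

/-- `U_n = z_{−n} − t^{n+1} z₁ y₀ y₋₁ ⋯ y₋ₙ`. -/
noncomputable def UU (n : ℕ) : Agr :=
  zA (-(n : ℤ)) - TA ^ (n + 1) * zA 1 * yProd (-(n : ℤ))

/-- `V_n = z_{−n} + Σ_{i=1}^{n} tⁱ z_{−n} z₁ y₀ y₋₁ ⋯ y_{2−i} − t^{n+1} z₁ y₀ ⋯ y_{1−n} y_{−1−n}`. -/
noncomputable def VV (n : ℕ) : Agr :=
  zA (-(n : ℤ)) + (∑ i ∈ Finset.Icc 1 n, TA ^ i * zA (-(n : ℤ)) * zA 1 * yProd (2 - (i : ℤ)))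
    - TA ^ (n + 1) * zA 1 * yProd (1 - (n : ℤ)) * yA (-1 - (n : ℤ))

/-- `W_n = (U_n, V_n) ∈ ℤ[H] ⊕ ℤ[H]`. -/
noncomputable def WW (n : ℕ) : Agr × Agr := (UU n, VV n)

/-- `1 − t + t x ∈ ℤ[H]`. -/
noncomputable def aElt : Agr := 1 - TA + TA * XA 0

/-- `1 − t + t² x t⁻¹ ∈ ℤ[H]`. -/
noncomputable def bElt : Agr := 1 - TA + MonoidAlgebra.of ℤ Hgrp (tE ^ 2 * xE 0 * tE⁻¹)

/-- The homomorphism of right `ℤ[H]`-modules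
`f(U, V) = (1 − t + t x)·U − (1 − t + t² x t⁻¹)·V`;
right `ℤ[H]`-modules are `ℤ[H]ᵐᵒᵖ`-modules. -/
noncomputable def fMap : (Agr × Agr) →ₗ[Agrᵐᵒᵖ] Agr where
  toFun p := aElt * p.1 - bElt * p.2
  map_add' v w := by
    simp only [Prod.fst_add, Prod.snd_add, mul_add]
    abel
  map_smul' c v := by
    simp only [Prod.smul_fst, Prod.smul_snd, MulOpposite.smul_eq_mul_unop, RingHom.id_apply]
    rw [sub_mul, mul_assoc, mul_assoc]

namespace St13

abbrev Ngrp : Type := Multiplicative (ℤ →₀ ℤ)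
noncomputable abbrev Rgr : Type := MonoidAlgebra ℤ Ngrp

noncomputable def xN (j : ℤ) : Ngrp := Multiplicative.ofAdd (Finsupp.single j 1)
noncomputable def ofR (v : Ngrp) : Rgr := MonoidAlgebra.of ℤ Ngrp v
noncomputable def XR (j : ℤ) : Rgr := ofR (xN j)
noncomputable def zR (a : ℤ) : Rgr := XR (a - 1) - XR a
noncomputable def yR (a : ℤ) : Rgr := 1 - XR a
noncomputable def yPR (k : ℤ) : Rgr :=
  ((List.range (1 - k).toNat).map (fun i => yR (-(i : ℤ)))).prod

noncomputable def ιR : Rgr →+* Agr :=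
  MonoidAlgebra.mapDomainRingHom ℤ (SemidirectProduct.inl : Ngrp →* Hgrp)

lemma ιR_single (v : Ngrp) (b : ℤ) :
    ιR (MonoidAlgebra.single v b) = MonoidAlgebra.single (SemidirectProduct.inl v : Hgrp) b := by
  simp [ιR, MonoidAlgebra.mapDomainRingHom, MonoidAlgebra.mapDomain_single]

lemma xE_eq (j : ℤ) : xE j = SemidirectProduct.inl (xN j) := rfl

lemma XA_eq (j : ℤ) : XA j = ιR (XR j) := by
  rw [XR, ofR, MonoidAlgebra.of_apply, ιR_single, XA, MonoidAlgebra.of_apply, xE_eq]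

lemma zA_eq (a : ℤ) : zA a = ιR (zR a) := by
  rw [zA, zR, map_sub, XA_eq, XA_eq]

lemma yA_eq (a : ℤ) : yA a = ιR (yR a) := by
  rw [yA, yR, map_sub, XA_eq, map_one]

lemma yProd_eq_aux (L : List ℤ) :
    (L.map (fun i => yA (-i))).prod = ιR (L.map (fun i => yR (-i))).prod := by
  induction L with
  | nil => simp
  | cons a L ih =>
    rw [List.map_cons, List.prod_cons, List.map_cons, List.prod_cons, map_mul, ih, yA_eq]

lemma yProd_eq (k : ℤ) : yProd k = ιR (yPR k) := by
  rw [yProd, yPR]; exact yProd_eq_aux _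

def νf (n : ℕ) (s j : ℤ) : ℤ := if 3 - (n : ℤ) - s ≤ j ∧ j ≤ 2 - s then 2 - s else j

noncomputable def κh (n : ℕ) (s : ℤ) : Ngrp →* Ngrp :=
  AddMonoidHom.toMultiplicative (Finsupp.mapDomain.addMonoidHom (νf n s))

lemma κh_xN (n : ℕ) (s j : ℤ) : κh n s (xN j) = xN (νf n s j) := by
  simp only [κh, xN, AddMonoidHom.toMultiplicative_apply_apply, toAdd_ofAdd,
    Finsupp.mapDomain.addMonoidHom_apply, Finsupp.mapDomain_single]

noncomputable def KR (n : ℕ) (s : ℤ) : Rgr →+* Rgr :=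
  MonoidAlgebra.mapDomainRingHom ℤ (κh n s)

lemma KR_single (n : ℕ) (s : ℤ) (v : Ngrp) (b : ℤ) :
    KR n s (MonoidAlgebra.single v b) = MonoidAlgebra.single (κh n s v) b := by
  simp [KR, MonoidAlgebra.mapDomainRingHom, MonoidAlgebra.mapDomain_single]

noncomputable def φm (n : ℕ) (s : ℤ) (h : Hgrp) : Hgrp := ⟨κh n s h.left, h.right⟩

noncomputable def ΘA (n : ℕ) (s : ℤ) : Agr →+ Agr :=
  { toFun := MonoidAlgebra.mapDomain (φm n s), map_zero' := MonoidAlgebra.mapDomain_zero _,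
    map_add' := MonoidAlgebra.mapDomain_add _ }

lemma ΘA_single (n : ℕ) (s : ℤ) (h : Hgrp) (b : ℤ) :
    ΘA n s (MonoidAlgebra.single h b) = MonoidAlgebra.single (φm n s h) b :=
  MonoidAlgebra.mapDomain_single

lemma inl_injH (m : ℤ) :
    Function.Injective (fun v : Ngrp => (⟨v, Multiplicative.ofAdd m⟩ : Hgrp)) :=
  fun a b h => congrArg SemidirectProduct.left h

noncomputable def γA (m : ℤ) : Agr →+ Rgr :=
  MonoidAlgebra.comapDomainAddMonoidHom _ (inl_injH m)

example : NoZeroDivisors Rgr := inferInstance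

lemma inl_mul_mk (p : Ngrp) (h : Hgrp) :
    (SemidirectProduct.inl p) * h = ⟨p * h.left, h.right⟩ := by
  ext <;> simp

lemma shiftHom_one : shiftHom (Multiplicative.ofAdd (1 : ℤ)) = shiftAut := by
  simp [shiftHom, zpowersHom_apply]

lemma tE_mul_mk (h : Hgrp) :
    tE * h = ⟨shiftAut h.left, Multiplicative.ofAdd 1 * h.right⟩ := by
  refine SemidirectProduct.ext ?_ ?_
  · show (1 : Ngrp) * (shiftHom (Multiplicative.ofAdd (1 : ℤ))) h.left = shiftAut h.left
    rw [one_mul, shiftHom_one]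
  · rfl

lemma κh_apply' (n : ℕ) (s : ℤ) (w : Ngrp) :
    κh n s w = Multiplicative.ofAdd
      (Finsupp.mapDomain (νf n s) (Multiplicative.toAdd w)) := rfl

lemma shiftAut_apply' (w : Ngrp) :
    shiftAut w = Multiplicative.ofAdd
      (Finsupp.mapDomain (fun j => j + 1) (Multiplicative.toAdd w)) := by
  show Multiplicative.ofAdd (Finsupp.equivMapDomain (Equiv.addRight (1:ℤ))
      (Multiplicative.toAdd w)) = _
  rw [Finsupp.equivMapDomain_eq_mapDomain]
  rfl

lemma νf_shift (n : ℕ) (s j : ℤ) : νf n s (j + 1) = νf n (s + 1) j + 1 := by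
  unfold νf; split_ifs <;> omega

lemma κh_shiftAut (n : ℕ) (s : ℤ) (v : Ngrp) :
    κh n s (shiftAut v) = shiftAut (κh n (s + 1) v) := by
  rw [κh_apply', shiftAut_apply', shiftAut_apply', κh_apply']
  simp only [toAdd_ofAdd]
  rw [← Finsupp.mapDomain_comp, ← Finsupp.mapDomain_comp,
    show (νf n s ∘ fun j => j + 1) = ((fun j => j + 1) ∘ νf n (s + 1)) from
      funext fun j => νf_shift n s j]

lemma φm_inl_mul (n : ℕ) (s : ℤ) (p : Ngrp) (h : Hgrp) :
    φm n s (SemidirectProduct.inl p * h) = SemidirectProduct.inl (κh n s p) * φm n s h := by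
  rw [inl_mul_mk, inl_mul_mk]
  show (⟨κh n s (p * h.left), h.right⟩ : Hgrp) = ⟨κh n s p * (φm n s h).left, (φm n s h).right⟩
  rw [map_mul]; rfl

lemma φm_tE_mul (n : ℕ) (s : ℤ) (h : Hgrp) :
    φm n s (tE * h) = tE * φm n (s + 1) h := by
  rw [tE_mul_mk, tE_mul_mk]
  show (⟨κh n s (shiftAut h.left), Multiplicative.ofAdd 1 * h.right⟩ : Hgrp) = _
  rw [κh_shiftAut]; rfl

lemma ΘA_ι_mul (n : ℕ) (s : ℤ) (u : Rgr) (w : Agr) :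
    ΘA n s (ιR u * w) = ιR (KR n s u) * ΘA n s w := by
  induction u using MonoidAlgebra.induction_linear with
  | zero => simp
  | add f g hf hg => rw [map_add, add_mul, map_add, hf, hg, map_add, map_add, add_mul]
  | single p b =>
    induction w using MonoidAlgebra.induction_linear with
    | zero => simp
    | add f g hf hg => rw [mul_add, map_add, hf, hg, map_add, mul_add]
    | single h d =>
      rw [ιR_single, KR_single, ιR_single, MonoidAlgebra.single_mul_single, ΘA_single,
        ΘA_single, MonoidAlgebra.single_mul_single, φm_inl_mul]

lemma TA_single : TA = MonoidAlgebra.single tE 1 := rfl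

lemma ΘA_T_mul (n : ℕ) (s : ℤ) (w : Agr) :
    ΘA n s (TA * w) = TA * ΘA n (s + 1) w := by
  induction w using MonoidAlgebra.induction_linear with
  | zero => simp
  | add f g hf hg => rw [mul_add, map_add, hf, hg, map_add, mul_add]
  | single h d =>
    rw [TA_single, MonoidAlgebra.single_mul_single, ΘA_single, ΘA_single,
      MonoidAlgebra.single_mul_single, φm_tE_mul]

lemma ΘA_Tpow_mul (n : ℕ) (j : ℕ) (s : ℤ) (w : Agr) :
    ΘA n s (TA ^ j * w) = TA ^ j * ΘA n (s + (j : ℤ)) w := by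
  induction j generalizing s with
  | zero => simp
  | succ j ih =>
    have harith : s + 1 + (j : ℤ) = s + ((j : ℕ) + 1 : ℕ) := by push_cast; ring
    rw [pow_succ', mul_assoc, ΘA_T_mul, ih, ← mul_assoc, ← pow_succ', harith]

lemma γA_apply (m : ℤ) (w : Agr) (v : Ngrp) :
    (γA m w).coeff v = w.coeff ⟨v, Multiplicative.ofAdd m⟩ := rfl

lemma γA_single (m : ℤ) (v : Ngrp) (l : Multiplicative ℤ) (d : ℤ) :
    γA m (MonoidAlgebra.single (⟨v, l⟩ : Hgrp) d)
      = if l = Multiplicative.ofAdd m then MonoidAlgebra.single v d else 0 := by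
  ext w
  rw [γA_apply, MonoidAlgebra.coeff_single, Finsupp.single_apply]
  by_cases hl : l = Multiplicative.ofAdd m
  · rw [if_pos hl, MonoidAlgebra.coeff_single, Finsupp.single_apply]
    by_cases hv : v = w
    · rw [if_pos (show (⟨v, l⟩ : Hgrp) = ⟨w, Multiplicative.ofAdd m⟩ by rw [hv, hl]), if_pos hv]
    · rw [if_neg (fun hh => hv (congrArg SemidirectProduct.left hh)), if_neg hv]
  · rw [if_neg (fun hh => hl (congrArg SemidirectProduct.right hh)), if_neg hl,
      MonoidAlgebra.coeff_zero, Finsupp.zero_apply]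

lemma γA_eq_zero (w : Agr) (h : ∀ m : ℤ, γA m w = 0) : w = 0 := by
  ext g
  have h3 : (γA (Multiplicative.toAdd g.right) w).coeff g.left = 0 := by rw [h]; rfl
  rw [γA_apply] at h3
  simpa using h3

lemma γA_ι_mul (m : ℤ) (u : Rgr) (w : Agr) : γA m (ιR u * w) = u * γA m w := by
  induction u using MonoidAlgebra.induction_linear with
  | zero => simp
  | add f g hf hg => rw [map_add, add_mul, map_add, hf, hg, add_mul]
  | single p b =>
    induction w using MonoidAlgebra.induction_linear with
    | zero => simp
    | add f g hf hg => rw [mul_add, map_add, hf, hg, map_add, mul_add]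
    | single h d =>
      obtain ⟨v, l⟩ := h
      rw [ιR_single, MonoidAlgebra.single_mul_single, inl_mul_mk]
      show γA m (MonoidAlgebra.single (⟨p * v, l⟩ : Hgrp) (b * d)) = _
      rw [γA_single, γA_single, mul_ite, mul_zero, MonoidAlgebra.single_mul_single]

lemma ι_mul_cancel {u : Rgr} (hu : u ≠ 0) {w : Agr} (h : ιR u * w = 0) : w = 0 := by
  refine γA_eq_zero w (fun m => ?_)
  have h2 : u * γA m w = 0 := by rw [← γA_ι_mul, h, map_zero]
  exact (mul_eq_zero.mp h2).resolve_left hu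

lemma T_pow_cancel (j : ℕ) (w : Agr) (h : TA ^ j * w = 0) : w = 0 := by
  have h1 : TA ^ j = MonoidAlgebra.of ℤ Hgrp (tE ^ j) := (map_pow _ _ _).symm
  calc w = MonoidAlgebra.of ℤ Hgrp ((tE ^ j)⁻¹) * (MonoidAlgebra.of ℤ Hgrp (tE ^ j) * w) := by
        rw [← mul_assoc, ← map_mul, inv_mul_cancel, map_one, one_mul]
    _ = 0 := by rw [← h1, h, mul_zero]
noncomputable abbrev Sspan (n : ℕ) : Submodule Agrᵐᵒᵖ Agr :=
  Submodule.span Agrᵐᵒᵖ {a : Agr | ∃ j < n, a = zA (-(j : ℤ))}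

lemma zA_mem (n : ℕ) {j : ℕ} (hj : j < n) : zA (-(j : ℤ)) ∈ Sspan n :=
  Submodule.subset_span ⟨j, hj, rfl⟩

lemma Sspan_mul_mem (n : ℕ) {a : Agr} (ha : a ∈ Sspan n) (b : Agr) : a * b ∈ Sspan n := by
  have := (Sspan n).smul_mem (MulOpposite.op b) ha
  rwa [MulOpposite.smul_eq_mul_unop, MulOpposite.unop_op] at this

noncomputable def oI : Ngrp →* Agr :=
  (MonoidAlgebra.of ℤ Hgrp).comp (SemidirectProduct.inl : Ngrp →* Hgrp)

lemma oI_apply (u : Ngrp) : oI u = MonoidAlgebra.of ℤ Hgrp (SemidirectProduct.inl u) := rfl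

noncomputable def Ksub (n : ℕ) : Subgroup Ngrp :=
  Subgroup.closure {u : Ngrp | ∃ r : ℕ, r + 2 ≤ n ∧ u = xN (-1 - (r : ℤ)) * (xN (-(r : ℤ)))⁻¹}

lemma XA_oI (j : ℤ) : XA j = oI (xN j) := rfl

lemma oI_sub_one_mem (n : ℕ) {u : Ngrp} (hu : u ∈ Ksub n) : oI u - 1 ∈ Sspan n := by
  induction hu using Subgroup.closure_induction with
  | mem x hx =>
    obtain ⟨r, hr, rfl⟩ := hx
    have key : oI (xN (-1 - (r : ℤ)) * (xN (-(r : ℤ)))⁻¹) - 1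
        = zA (-(r : ℤ)) * oI ((xN (-(r : ℤ)))⁻¹) := by
      rw [zA, sub_mul, XA_oI, XA_oI, ← map_mul, ← map_mul, mul_inv_cancel]
      rw [show (-(r : ℤ) - 1) = (-1 - (r : ℤ)) by ring, map_one]
    rw [key]
    exact Sspan_mul_mem n (zA_mem n (by omega)) _
  | one => rw [map_one, sub_self]; exact zero_mem _
  | mul x y hx hy ihx ihy =>
    have key : oI (x * y) - 1 = (oI x - 1) * oI y + (oI y - 1) := by
      rw [map_mul, sub_mul, one_mul, sub_add_sub_cancel]
    rw [key]
    exact add_mem (Sspan_mul_mem n ihx _) ihy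
  | inv x hx ihx =>
    have key : oI x⁻¹ - 1 = -((oI x - 1) * oI x⁻¹) := by
      rw [sub_mul, one_mul, ← map_mul, mul_inv_cancel, map_one, neg_sub]
    rw [key]
    exact neg_mem (Sspan_mul_mem n ihx _)

lemma chain_mem (n : ℕ) : ∀ s : ℕ, s < n →
    Multiplicative.ofAdd (Finsupp.single (-(s : ℤ)) 1 - Finsupp.single 0 1) ∈ Ksub n := by
  intro s
  induction s with
  | zero => intro _; rw [show (-((0:ℕ) : ℤ)) = 0 by norm_num, sub_self]; exact one_mem _
  | succ s ih =>
    intro hs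
    have h1 : Multiplicative.ofAdd ((Finsupp.single (-1 - (s : ℤ)) 1
        - Finsupp.single (-(s : ℤ)) 1)
        + (Finsupp.single (-(s : ℤ)) 1 - Finsupp.single 0 1)) ∈ Ksub n := by
      rw [ofAdd_add]
      refine mul_mem (Subgroup.subset_closure ⟨s, by omega, ?_⟩) (ih (by omega))
      rw [xN, xN, ← ofAdd_neg, ← ofAdd_add, sub_eq_add_neg]
    convert h1 using 2
    rw [show (-((s + 1 : ℕ) : ℤ)) = -1 - (s : ℤ) by push_cast; ring]
    abel

lemma sub_collapse_mem (n : ℕ) (v : Ngrp) : v * (κh n 2 v)⁻¹ ∈ Ksub n := by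
  have main : ∀ g : ℤ →₀ ℤ,
      Multiplicative.ofAdd g * (κh n 2 (Multiplicative.ofAdd g))⁻¹ ∈ Ksub n := by
    intro g
    induction g using Finsupp.induction_linear with
    | zero =>
      rw [show Multiplicative.ofAdd (0 : ℤ →₀ ℤ) = 1 from rfl, map_one, inv_one, mul_one]
      exact one_mem _
    | add f g hf hg =>
      rw [ofAdd_add, map_mul, mul_inv, mul_mul_mul_comm]
      exact mul_mem hf hg
    | single j b =>
      have happ : κh n 2 (Multiplicative.ofAdd (Finsupp.single j b))
          = Multiplicative.ofAdd (Finsupp.single (νf n 2 j) b) := by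
        rw [κh_apply', toAdd_ofAdd, Finsupp.mapDomain_single]
      rw [happ]
      by_cases hj : νf n 2 j = j
      · rw [hj, mul_inv_cancel]; exact one_mem _
      · have hcond : (1 - (n : ℤ) ≤ j ∧ j ≤ 0) ∧ νf n 2 j = 0 := by
          unfold νf at hj ⊢
          split_ifs at hj ⊢ with hc
          · exact ⟨by omega, by omega⟩
          · exact absurd rfl hj
        rw [hcond.2, ← ofAdd_neg, ← ofAdd_add, ← sub_eq_add_neg,
          show Finsupp.single j b - Finsupp.single (0:ℤ) b
              = b • (Finsupp.single j 1 - Finsupp.single (0:ℤ) 1) by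
            rw [smul_sub, Finsupp.smul_single, Finsupp.smul_single, smul_eq_mul, mul_one],
          ofAdd_zsmul]
        refine zpow_mem ?_ b
        rw [show j = -(((-j).toNat : ℕ) : ℤ) by omega]
        exact chain_mem n _ (by omega)
  have := main (Multiplicative.toAdd v)
  simpa using this

lemma of_sub_phi_mem (n : ℕ) (h : Hgrp) :
    MonoidAlgebra.of ℤ Hgrp h - MonoidAlgebra.of ℤ Hgrp (φm n 2 h) ∈ Sspan n := by
  have hfact : h = SemidirectProduct.inl (h.left * (κh n 2 h.left)⁻¹) * φm n 2 h := by
    rw [inl_mul_mk]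
    refine SemidirectProduct.ext ?_ rfl
    show h.left = h.left * (κh n 2 h.left)⁻¹ * (κh n 2 h.left)
    rw [inv_mul_cancel_right]
  have key : MonoidAlgebra.of ℤ Hgrp h - MonoidAlgebra.of ℤ Hgrp (φm n 2 h)
      = (oI (h.left * (κh n 2 h.left)⁻¹) - 1) * MonoidAlgebra.of ℤ Hgrp (φm n 2 h) := by
    rw [sub_mul, one_mul, oI_apply, ← map_mul, ← hfact]
  rw [key]
  exact Sspan_mul_mem n (oI_sub_one_mem n (sub_collapse_mem n h.left)) _

lemma sub_theta_mem (n : ℕ) (w : Agr) : w - ΘA n 2 w ∈ Sspan n := by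
  induction w using MonoidAlgebra.induction_linear with
  | zero => rw [map_zero, sub_zero]; exact zero_mem _
  | add f g hf hg => rw [map_add, add_sub_add_comm]; exact add_mem hf hg
  | single h b =>
    rw [ΘA_single]
    have key : (MonoidAlgebra.single h b : Agr) - MonoidAlgebra.single (φm n 2 h) b
        = b • (MonoidAlgebra.of ℤ Hgrp h - MonoidAlgebra.of ℤ Hgrp (φm n 2 h)) := by
      rw [smul_sub, MonoidAlgebra.of_apply, MonoidAlgebra.of_apply, MonoidAlgebra.smul_single,
        MonoidAlgebra.smul_single, smul_eq_mul, mul_one]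
    rw [key]
    exact (Sspan n).toAddSubgroup.zsmul_mem (of_sub_phi_mem n h) b

lemma KR_ofR (n : ℕ) (s : ℤ) (v : Ngrp) : KR n s (ofR v) = ofR (κh n s v) := by
  rw [ofR, MonoidAlgebra.of_apply, KR_single, ofR, MonoidAlgebra.of_apply]

lemma KR_z (n : ℕ) (s a : ℤ) : KR n s (zR a)
    = ofR (xN (νf n s (a - 1))) - ofR (xN (νf n s a)) := by
  rw [zR, map_sub, XR, XR, KR_ofR, KR_ofR, κh_xN, κh_xN]

lemma KR_z_zero (n : ℕ) (s a : ℤ) (h : νf n s (a - 1) = νf n s a) : KR n s (zR a) = 0 := by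
  rw [KR_z, h, sub_self]

lemma xN_inj {a b : ℤ} (h : xN a = xN b) : a = b := by
  have h2 : (Finsupp.single a 1 : ℤ →₀ ℤ) = Finsupp.single b 1 := h
  rcases (Finsupp.single_eq_single_iff _ _ _ _).mp h2 with ⟨h3, _⟩ | ⟨h3, _⟩
  · exact h3
  · exact absurd h3 one_ne_zero

lemma ofR_sub_ne (a b : ℤ) (hab : a ≠ b) : ofR (xN a) - ofR (xN b) ≠ 0 := by
  rw [sub_ne_zero, ofR, ofR, MonoidAlgebra.of_apply, MonoidAlgebra.of_apply]
  intro hh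
  rcases MonoidAlgebra.single_inj.mp hh with ⟨h3, _⟩ | ⟨h3, _⟩
  · exact hab (xN_inj h3)
  · exact one_ne_zero h3

lemma one_sub_ofR_ne (a : ℤ) : (1 : Rgr) - ofR (xN a) ≠ 0 := by
  rw [sub_ne_zero, show (1 : Rgr) = ofR 1 from (map_one _).symm, ofR, ofR,
    MonoidAlgebra.of_apply, MonoidAlgebra.of_apply]
  intro hh
  rcases MonoidAlgebra.single_inj.mp hh with ⟨h3, _⟩ | ⟨h3, _⟩
  · have h4 : Finsupp.single a (1:ℤ) = 0 := by
      have h5 : (0 : ℤ →₀ ℤ) = Finsupp.single a 1 := h3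
      exact h5.symm
    exact one_ne_zero (Finsupp.single_eq_zero.mp h4)
  · exact one_ne_zero h3

lemma yPR_succ (i : ℕ) : yPR (-(i : ℤ)) = yPR (1 - (i : ℤ)) * yR (-(i : ℤ)) := by
  rw [yPR, yPR, show (1 - (-(i : ℤ))).toNat = i + 1 by omega,
    show (1 - (1 - (i : ℤ))).toNat = i by omega, List.range_succ]
  simp

lemma yPR_one : yPR 1 = 1 := by
  rw [yPR, show ((1 : ℤ) - 1).toNat = 0 by omega]
  simp

lemma yPR_zero : yPR 0 = yR 0 := by
  rw [yPR, show ((1:ℤ) - 0).toNat = 1 by norm_num]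
  simp [List.range_succ]

lemma VmU (i : ℕ) : VV i - UU i
    = ∑ j ∈ Finset.Icc 1 (i + 1), TA ^ j * ιR (zR (-(i:ℤ)) * zR 1 * yPR (2 - (j:ℤ))) := by
  have h1 : zR (-(i:ℤ)) = yR (-(i:ℤ)) - yR (-1 - (i:ℤ)) := by
    rw [zR, yR, yR, show (-(i:ℤ) - 1) = -1 - (i:ℤ) by ring]; ring
  have hlast : TA ^ (i+1) * zA 1 * yProd (-(i:ℤ))
      - TA ^ (i+1) * zA 1 * yProd (1 - (i:ℤ)) * yA (-1 - (i:ℤ))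
      = TA ^ (i+1) * ιR (zR (-(i:ℤ)) * zR 1 * yPR (2 - ((i+1 : ℕ) : ℤ))) := by
    rw [zA_eq, yProd_eq, yProd_eq, yA_eq]
    simp only [mul_assoc]
    rw [← map_mul, ← map_mul, ← map_mul, ← mul_sub, ← map_sub]
    congr 1
    rw [show (2 - ((i+1:ℕ):ℤ)) = 1 - (i:ℤ) by push_cast; ring, yPR_succ, h1]
    ring
  have hsum : (∑ j ∈ Finset.Icc 1 i, TA ^ j * zA (-(i:ℤ)) * zA 1 * yProd (2 - (j:ℤ)))
      = ∑ j ∈ Finset.Icc 1 i, TA ^ j * ιR (zR (-(i:ℤ)) * zR 1 * yPR (2 - (j:ℤ))) := by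
    refine Finset.sum_congr rfl fun j _ => ?_
    rw [zA_eq, zA_eq, yProd_eq]
    simp only [mul_assoc]
    rw [← map_mul, ← map_mul]
  rw [UU, VV, hsum, Finset.sum_Icc_succ_top (Nat.le_add_left 1 i), ← hlast]
  abel
end St13
/-- If `n ≥ 1` and `Σ_{i=0}^{n−1} W_i·c_i = 0`, then `c_{n−1}` belongs to
the right ideal of `ℤ[H]` generated by `z₀, z₋₁, …, z_{1−n}`. -/
theorem last_coeff_mem_ideal (n : ℕ) (hn : 1 ≤ n) (c : ℕ → Agr)
    (hc : ∑ i ∈ Finset.range n, MulOpposite.op (c i) • WW i = 0) :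
    c (n - 1) ∈ Submodule.span Agrᵐᵒᵖ {a : Agr | ∃ j < n, a = zA (-(j : ℤ))} := by
  classical
  have hU : (∑ i ∈ Finset.range n, UU i * c i) = 0 := by
    have h1 := congrArg Prod.fst hc
    simpa [WW, Prod.fst_sum, MulOpposite.smul_eq_mul_unop] using h1
  have hV : (∑ i ∈ Finset.range n, VV i * c i) = 0 := by
    have h1 := congrArg Prod.snd hc
    simpa [WW, Prod.snd_sum, MulOpposite.smul_eq_mul_unop] using h1
  have hW : (∑ i ∈ Finset.range n, ∑ j ∈ Finset.Icc 1 (i+1),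
      TA ^ j * (St13.ιR (St13.zR (-(i:ℤ)) * St13.zR 1 * St13.yPR (2 - (j:ℤ))) * c i)) = 0 := by
    have h2 : (∑ i ∈ Finset.range n, (VV i - UU i) * c i) = 0 := by
      rw [show (∑ i ∈ Finset.range n, (VV i - UU i) * c i)
          = (∑ i ∈ Finset.range n, VV i * c i) - ∑ i ∈ Finset.range n, UU i * c i by
        rw [← Finset.sum_sub_distrib]
        exact Finset.sum_congr rfl fun i _ => sub_mul _ _ _, hU, hV, sub_self]
    rw [← h2]
    refine Finset.sum_congr rfl fun i _ => ?_
    rw [St13.VmU, Finset.sum_mul]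
    exact Finset.sum_congr rfl fun j _ => (mul_assoc _ _ _).symm
  have hT : (∑ i ∈ Finset.range n, ∑ j ∈ Finset.Icc 1 (i+1),
      TA ^ j * (St13.ιR (St13.KR n (j:ℤ) (St13.zR (-(i:ℤ)) * St13.zR 1
        * St13.yPR (2 - (j:ℤ)))) * St13.ΘA n (j:ℤ) (c i))) = 0 := by
    have h3 := congrArg (St13.ΘA n 0) hW
    rw [map_zero, map_sum] at h3
    rw [← h3]
    refine Finset.sum_congr rfl fun i _ => ?_
    rw [map_sum]
    refine Finset.sum_congr rfl fun j _ => ?_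
    rw [St13.ΘA_Tpow_mul, St13.ΘA_ι_mul, zero_add]
  rcases eq_or_lt_of_le hn with hn1 | hn2
  · -- the case n = 1
    have hn1' : n = 1 := hn1.symm
    subst hn1'
    rw [show (1:ℕ) - 1 = 0 from rfl]
    rw [Finset.sum_range_one, show (0:ℕ)+1 = 1 from rfl, Finset.Icc_self,
      Finset.sum_singleton] at hW
    rw [show (2 - ((1:ℕ):ℤ)) = 1 by norm_num, St13.yPR_one, mul_one,
      show (-((0:ℕ):ℤ)) = 0 by norm_num] at hW
    have h6 := St13.T_pow_cancel 1 _ hW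
    have hz0 : St13.zR 0 ≠ 0 := by
      rw [St13.zR, St13.XR, St13.XR]; exact St13.ofR_sub_ne _ _ (by norm_num)
    have hz1 : St13.zR 1 ≠ 0 := by
      rw [St13.zR, St13.XR, St13.XR]; exact St13.ofR_sub_ne _ _ (by norm_num)
    have h7 : c 0 = 0 := St13.ι_mul_cancel (mul_ne_zero hz0 hz1) h6
    rw [h7]
    exact zero_mem _
  · -- the case n ≥ 2
    have hvan : ∀ i, i < n → ∀ j : ℕ, 1 ≤ j → j ≤ i + 1 → ¬(i = n - 1 ∧ j = 2) →
        St13.KR n (j:ℤ) (St13.zR (-(i:ℤ)) * St13.zR 1 * St13.yPR (2 - (j:ℤ))) = 0 := by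
      intro i hi j hj1 hj2 hne
      rw [map_mul, map_mul]
      by_cases hj : j = 1
      · subst hj
        have hz1 : St13.KR n ((1:ℕ):ℤ) (St13.zR 1) = 0 := by
          refine St13.KR_z_zero n _ 1 ?_
          unfold St13.νf; split_ifs <;> omega
        rw [hz1, mul_zero, zero_mul]
      · have hcase : i = n - 1 → j ≠ 2 := fun h1 h2 => hne ⟨h1, h2⟩
        have hzi : St13.KR n ((j:ℕ):ℤ) (St13.zR (-(i:ℤ))) = 0 := by
          refine St13.KR_z_zero n _ _ ?_
          unfold St13.νf; split_ifs <;> omega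
        rw [hzi, zero_mul, zero_mul]
    have houter : ∀ i ∈ Finset.range n, i ≠ n - 1 →
        (∑ j ∈ Finset.Icc 1 (i+1),
          TA ^ j * (St13.ιR (St13.KR n (j:ℤ) (St13.zR (-(i:ℤ)) * St13.zR 1
            * St13.yPR (2 - (j:ℤ)))) * St13.ΘA n (j:ℤ) (c i))) = 0 := by
      intro i hi hine
      refine Finset.sum_eq_zero fun j hj => ?_
      rw [Finset.mem_Icc] at hj
      rw [hvan i (Finset.mem_range.mp hi) j hj.1 hj.2 (fun hh => hine hh.1), map_zero,
        zero_mul, mul_zero]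
    rw [Finset.sum_eq_single_of_mem (n-1) (Finset.mem_range.mpr (by omega)) houter] at hT
    have hinner : ∀ j ∈ Finset.Icc 1 ((n-1)+1), j ≠ 2 →
        TA ^ j * (St13.ιR (St13.KR n (j:ℤ) (St13.zR (-((n-1:ℕ):ℤ)) * St13.zR 1
          * St13.yPR (2 - (j:ℤ)))) * St13.ΘA n (j:ℤ) (c (n-1))) = 0 := by
      intro j hj hjne
      rw [Finset.mem_Icc] at hj
      rw [hvan (n-1) (by omega) j hj.1 hj.2 (fun hh => hjne hh.2), map_zero, zero_mul,
        mul_zero]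
    rw [Finset.sum_eq_single_of_mem 2 (Finset.mem_Icc.mpr (by omega)) hinner] at hT
    have hval : St13.KR n ((2:ℕ):ℤ) (St13.zR (-((n-1:ℕ):ℤ)) * St13.zR 1
        * St13.yPR (2 - ((2:ℕ):ℤ)))
        = (St13.ofR (St13.xN (-(n:ℤ))) - St13.ofR (St13.xN 0))
          * (St13.ofR (St13.xN 0) - St13.ofR (St13.xN 1))
          * (1 - St13.ofR (St13.xN 0)) := by
      rw [show (-((n-1:ℕ):ℤ)) = 1 - (n:ℤ) by omega,
        show ((2:ℤ) - ((2:ℕ):ℤ)) = 0 by norm_num, St13.yPR_zero, map_mul, map_mul,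
        St13.KR_z, St13.KR_z, St13.yR, map_sub, map_one, St13.XR, St13.KR_ofR, St13.κh_xN,
        show St13.νf n ((2:ℕ):ℤ) (1 - (n:ℤ) - 1) = -(n:ℤ) from by
          unfold St13.νf; split_ifs <;> omega,
        show St13.νf n ((2:ℕ):ℤ) (1 - (n:ℤ)) = 0 from by
          unfold St13.νf; split_ifs <;> omega,
        show St13.νf n ((2:ℕ):ℤ) ((1:ℤ) - 1) = 0 from by
          unfold St13.νf; split_ifs <;> omega,
        show St13.νf n ((2:ℕ):ℤ) (1:ℤ) = 1 from by
          unfold St13.νf; split_ifs <;> omega,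
        show St13.νf n ((2:ℕ):ℤ) (0:ℤ) = 0 from by
          unfold St13.νf; split_ifs <;> omega]
    rw [hval] at hT
    have h6 := St13.T_pow_cancel 2 _ hT
    have hune : ((St13.ofR (St13.xN (-(n:ℤ))) - St13.ofR (St13.xN 0))
        * (St13.ofR (St13.xN 0) - St13.ofR (St13.xN 1))
        * (1 - St13.ofR (St13.xN 0)) : St13.Rgr) ≠ 0 :=
      mul_ne_zero (mul_ne_zero (St13.ofR_sub_ne _ _ (by omega))
        (St13.ofR_sub_ne 0 1 (by norm_num))) (St13.one_sub_ofR_ne 0)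
    have h7 : St13.ΘA n ((2:ℕ):ℤ) (c (n-1)) = 0 := St13.ι_mul_cancel hune h6
    have h8 := St13.sub_theta_mem n (c (n-1))
    rw [show ((2:ℕ):ℤ) = 2 by norm_num] at h7
    rw [h7, sub_zero] at h8
    exact h8
end

section
/- For every n ≥ 0, the element W_n does not belong to the right ℤ[H]-submodule of ℤ[H] ⊕ ℤ[H] generated by W₀, W₁, …, W_{n−1}; consequently, the right submodules E_n generated by {W₀, …, W_{n−1}} form a strictly increasing chain E₀ ⊊ E₁ ⊊ E₂ ⊊ ⋯. -/
open Finsupp Multiplicative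

/-! For `c : ℤ`, let `λ_c = exponentSum c : ℤ[H] → ℤ` be the additive extension of the map
sending a group element to the exponent of `x_c` in its `N`-component. Left multiplication by
`x_j` adds a basis vector to the `N`-component and left multiplication by `t` shifts it, so
`λ_c (x_j w) = λ_c w` for `j ≠ c` and `λ_c (t w) = λ_{c-1} w`; hence `λ_c` kills `z_j ℤ[H]`
whenever `c ∉ {j - 1, j}`. For `c = -n - 1` this makes `λ_c` vanish on `U_i ℤ[H]` for all
`i < n`, so on the first coordinates of the right submodule generated by `W₀, …, W_{n-1}`,
whereas `λ_c U_n = 1`. -/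

lemma toAdd_shiftAut_apply (p : Multiplicative (ℤ →₀ ℤ)) (c : ℤ) :
    toAdd (shiftAut p) c = toAdd p (c - 1) := by
  simp [shiftAut, sub_eq_add_neg]

lemma toAdd_shiftAut_inv_apply (p : Multiplicative (ℤ →₀ ℤ)) (c : ℤ) :
    toAdd (shiftAut⁻¹ p) c = toAdd p (c + 1) := by
  simpa using (toAdd_shiftAut_apply (shiftAut⁻¹ p) (c + 1)).symm

lemma toAdd_shiftAut_zpow_apply (k : ℤ) (p : Multiplicative (ℤ →₀ ℤ)) (c : ℤ) :
    toAdd ((shiftAut ^ k : MulAut _) p) c = toAdd p (c - k) := by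
  induction k using Int.induction_on generalizing p c with
  | zero => simp
  | succ k ih => rw [zpow_add_one, MulAut.mul_apply, ih, toAdd_shiftAut_apply, sub_sub, add_comm]
  | pred k ih =>
    rw [zpow_sub_one, MulAut.mul_apply, ih, toAdd_shiftAut_inv_apply, sub_sub_eq_add_sub,
      sub_add_eq_add_sub]

lemma toAdd_left_mul_apply (g h : Hgrp) (c : ℤ) :
    toAdd (g * h).left c = toAdd g.left c + toAdd h.left (c - toAdd g.right) := by
  rw [SemidirectProduct.mul_left, toAdd_mul, Finsupp.add_apply]
  simp [shiftHom, toAdd_shiftAut_zpow_apply]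

noncomputable def exponentSum (c : ℤ) : Agr →+ ℤ :=
  MonoidAlgebra.liftNC (AddMonoidHom.id ℤ) fun g : Hgrp => toAdd g.left c

lemma exponentSum_single (c : ℤ) (g : Hgrp) (k : ℤ) :
    exponentSum c (MonoidAlgebra.single g k) = k * toAdd g.left c :=
  MonoidAlgebra.liftNC_single _ _ _ _

lemma exponentSum_of_mul {c : ℤ} {g : Hgrp} (hg : toAdd g.left c = 0) (w : Agr) :
    exponentSum c (MonoidAlgebra.of ℤ Hgrp g * w) = exponentSum (c - toAdd g.right) w := by
  induction w using MonoidAlgebra.induction_linear with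
  | zero => simp
  | add v w hv hw => rw [mul_add, map_add, map_add, hv, hw]
  | single h k =>
    rw [MonoidAlgebra.of_apply, MonoidAlgebra.single_mul_single, one_mul, exponentSum_single,
      exponentSum_single, toAdd_left_mul_apply, hg, zero_add]

lemma exponentSum_XA_mul {c j : ℤ} (hj : j ≠ c) (w : Agr) :
    exponentSum c (XA j * w) = exponentSum c w := by
  rw [XA, exponentSum_of_mul] <;> simp [xE, hj]

lemma exponentSum_TA_pow_mul (c : ℤ) (m : ℕ) (w : Agr) :
    exponentSum c (TA ^ m * w) = exponentSum (c - m) w := by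
  induction m generalizing c with
  | zero => simp
  | succ m ih =>
    rw [pow_succ', mul_assoc, TA, exponentSum_of_mul (by simp [tE]), ← TA, ih]
    simp [tE, sub_sub, add_comm]

lemma exponentSum_zA_mul {c j : ℤ} (h₁ : j - 1 ≠ c) (h₂ : j ≠ c) (w : Agr) :
    exponentSum c (zA j * w) = 0 := by
  rw [zA, sub_mul, map_sub, exponentSum_XA_mul h₁, exponentSum_XA_mul h₂, sub_self]

lemma exponentSum_XA (c j : ℤ) : exponentSum c (XA j) = if j = c then 1 else 0 := by
  simp [XA, MonoidAlgebra.of_apply, exponentSum_single, xE, Finsupp.single_apply]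

lemma exponentSum_UU_mul {n i : ℕ} (hi : i < n) (r : Agr) :
    exponentSum (-n - 1) (UU i * r) = 0 := by
  rw [UU, sub_mul, map_sub, exponentSum_zA_mul (by omega) (by omega), mul_assoc, mul_assoc,
    exponentSum_TA_pow_mul, exponentSum_zA_mul (by push_cast; omega) (by push_cast; omega),
    sub_self]

lemma exponentSum_UU (n : ℕ) : exponentSum (-n - 1) (UU n) = 1 := by
  rw [UU, map_sub, mul_assoc, exponentSum_TA_pow_mul,
    exponentSum_zA_mul (by push_cast; omega) (by push_cast; omega), sub_zero, zA, map_sub,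
    exponentSum_XA, exponentSum_XA, if_pos rfl, if_neg (by omega), sub_zero]

lemma map_mul_eq_zero_of_mem_span {A B : Type*} [Semiring A] [AddCommMonoid B] (φ : A →+ B)
    {S : Set A} (hS : ∀ s ∈ S, ∀ r, φ (s * r) = 0) {v : A}
    (hv : v ∈ Submodule.span Aᵐᵒᵖ S) (r : A) : φ (v * r) = 0 := by
  induction hv using Submodule.span_induction generalizing r with
  | mem s hs => exact hS s hs r
  | zero => rw [zero_mul, map_zero]
  | add x y _ _ hx hy => rw [add_mul, map_add, hx, hy, add_zero]
  | smul a x _ hx => rw [MulOpposite.smul_eq_mul_unop, mul_assoc, hx]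

lemma span_lt_span_succ_of_notMem {R M : Type*} [Semiring R] [AddCommMonoid M] [Module R M]
    (w : ℕ → M) {n : ℕ} (h : w n ∉ Submodule.span R {x | ∃ i < n, x = w i}) :
    Submodule.span R {x | ∃ i < n, x = w i} < Submodule.span R {x | ∃ i < n + 1, x = w i} := by
  refine lt_of_le_of_ne (Submodule.span_mono ?_) fun heq => h ?_
  · rintro _ ⟨i, hi, rfl⟩
    exact ⟨i, by omega, rfl⟩
  · exact heq ▸ Submodule.subset_span ⟨n, n.lt_succ_self, rfl⟩

lemma WW_notMem_span (n : ℕ) :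
    WW n ∉ Submodule.span Agrᵐᵒᵖ {w : Agr × Agr | ∃ i < n, w = WW i} := by
  intro hmem
  have hU : UU n ∈ Submodule.span Agrᵐᵒᵖ
      (Prod.fst '' {w : Agr × Agr | ∃ i < n, w = WW i}) := by
    rw [← LinearMap.coe_fst (R := Agrᵐᵒᵖ), ← Submodule.map_span]
    exact Submodule.mem_map_of_mem hmem
  have hzero := map_mul_eq_zero_of_mem_span (exponentSum (-n - 1))
    (by rintro _ ⟨_, ⟨i, hi, rfl⟩, rfl⟩ r; exact exponentSum_UU_mul hi r) hU 1
  rw [mul_one, exponentSum_UU] at hzero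
  exact one_ne_zero hzero

/-- `W_n` never lies in the right `ℤ[H]`-submodule `E_n` of
`ℤ[H] ⊕ ℤ[H]` generated by `W₀, …, W_{n−1}`; consequently the chain `E₀ ⊊ E₁ ⊊ ⋯` is
strictly increasing. -/
theorem w_not_mem_span_previous :
    (∀ n : ℕ, WW n ∉ Submodule.span Agrᵐᵒᵖ {w : Agr × Agr | ∃ i < n, w = WW i}) ∧
    (∀ n : ℕ, Submodule.span Agrᵐᵒᵖ {w : Agr × Agr | ∃ i < n, w = WW i}
      < Submodule.span Agrᵐᵒᵖ {w : Agr × Agr | ∃ i < n + 1, w = WW i}) :=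
  ⟨WW_notMem_span, fun n => span_lt_span_succ_of_notMem WW (WW_notMem_span n)⟩
end

section
/- The kernel K of f is not finitely generated as a right ℤ[H]-module. -/
open Finsupp Multiplicative

namespace WreathAux

abbrev Ngrp : Type := Multiplicative (ℤ →₀ ℤ)
abbrev Rng : Type := MonoidAlgebra ℤ Ngrp

noncomputable def XR (i : ℤ) : Rng := MonoidAlgebra.single (ofAdd (Finsupp.single i (1:ℤ))) 1
noncomputable def yR (i : ℤ) : Rng := 1 - XR i
noncomputable def zR (i : ℤ) : Rng := XR (i-1) - XR i

noncomputable def Phi (f : ℤ → ℤ) : Rng →+* Rng :=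
  MonoidAlgebra.mapDomainRingHom ℤ ((Finsupp.mapDomain.addMonoidHom f).toMultiplicative)

lemma Phi_apply (f : ℤ → ℤ) (P : Rng) :
    Phi f P = MonoidAlgebra.ofCoeff (Finsupp.mapDomain (fun x : Ngrp => ofAdd (Finsupp.mapDomain f x.toAdd)) P.coeff) := rfl

lemma Phi_single (f : ℤ → ℤ) (x : Ngrp) (c : ℤ) :
    Phi f (MonoidAlgebra.single x c)
      = MonoidAlgebra.single (ofAdd (Finsupp.mapDomain f x.toAdd)) c := by
  rw [Phi_apply, MonoidAlgebra.coeff_single, Finsupp.mapDomain_single, MonoidAlgebra.ofCoeff_single]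

lemma Phi_X (f : ℤ → ℤ) (i : ℤ) : Phi f (XR i) = XR (f i) := by
  rw [XR, Phi_single, toAdd_ofAdd, Finsupp.mapDomain_single, XR]

lemma Phi_comp (f g : ℤ → ℤ) (P : Rng) : Phi f (Phi g P) = Phi (f ∘ g) P := by
  rw [Phi_apply, Phi_apply, Phi_apply, MonoidAlgebra.coeff_ofCoeff, ← Finsupp.mapDomain_comp]
  congr 2
  funext x
  simp only [Function.comp_apply, toAdd_ofAdd, ← Finsupp.mapDomain_comp]

lemma Phi_congr {f g : ℤ → ℤ} (h : ∀ x, f x = g x) (P : Rng) : Phi f P = Phi g P := by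
  have : f = g := funext h
  rw [this]

lemma Phi_id (f : ℤ → ℤ) (h : ∀ x, f x = x) (P : Rng) : Phi f P = P := by
  rw [Phi_congr h P, Phi_apply]
  have h2 : (fun x : Ngrp => ofAdd (Finsupp.mapDomain (fun y : ℤ => y) x.toAdd)) = id := by
    funext x
    show ofAdd (Finsupp.mapDomain id x.toAdd) = x
    rw [Finsupp.mapDomain_id]
    rfl
  rw [h2, Finsupp.mapDomain_id, MonoidAlgebra.ofCoeff_coeff]

lemma shiftAut_zpow (m : ℤ) : ∀ b : Ngrp,
    (shiftAut ^ m) b = ofAdd (Finsupp.mapDomain (· + m) b.toAdd) := by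
  have hone : ∀ b : Ngrp, shiftAut b = ofAdd (Finsupp.mapDomain (· + (1:ℤ)) b.toAdd) := by
    intro b
    show ofAdd ((Finsupp.domCongr (Equiv.addRight (1:ℤ))) b.toAdd) = _
    rw [Finsupp.domCongr_apply, Finsupp.equivMapDomain_eq_mapDomain]
    rfl
  have hinv : ∀ b : Ngrp, shiftAut⁻¹ b = ofAdd (Finsupp.mapDomain (· + (-1:ℤ)) b.toAdd) := by
    intro b
    show ofAdd ((Finsupp.domCongr (Equiv.addRight (1:ℤ))).symm b.toAdd) = _
    rw [Finsupp.domCongr_symm, Finsupp.domCongr_apply, Finsupp.equivMapDomain_eq_mapDomain,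
      Equiv.addRight_symm]
    rfl
  induction m using Int.induction_on with
  | zero =>
    intro b
    rw [zpow_zero]
    show b = _
    have : Finsupp.mapDomain (· + (0:ℤ)) b.toAdd = b.toAdd := by
      rw [show (· + (0:ℤ)) = (id : ℤ → ℤ) from funext fun x => add_zero x, Finsupp.mapDomain_id]
    rw [this]
    rfl
  | succ i ih =>
    intro b
    rw [zpow_add_one, MulAut.mul_apply, hone b, ih]
    rw [toAdd_ofAdd, ← Finsupp.mapDomain_comp]
    have hfe : ((fun x : ℤ => x + (i:ℤ)) ∘ fun x : ℤ => x + 1) = (fun x : ℤ => x + ((i:ℤ)+1)) :=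
      funext fun x => by simp only [Function.comp_apply]; omega
    rw [hfe]
  | pred i ih =>
    intro b
    rw [zpow_sub_one, MulAut.mul_apply, hinv b, ih]
    rw [toAdd_ofAdd, ← Finsupp.mapDomain_comp]
    have hfe : ((fun x : ℤ => x + (-(i:ℤ))) ∘ fun x : ℤ => x + (-1:ℤ)) = (fun x : ℤ => x + (-(i:ℤ)-1)) :=
      funext fun x => by simp only [Function.comp_apply]; omega
    rw [hfe]

lemma shiftHom_apply' (m : ℤ) (b : Ngrp) :
    (shiftHom (ofAdd m)) b = ofAdd (Finsupp.mapDomain (· + m) b.toAdd) := by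
  rw [shiftHom, zpowersHom_apply, toAdd_ofAdd, shiftAut_zpow]

noncomputable def slot (k : ℤ) (P : Agr) : Rng :=
  MonoidAlgebra.comapDomain (fun b : Ngrp => (⟨b, ofAdd k⟩ : Hgrp))
    (fun a b h => congrArg SemidirectProduct.left h) P

lemma slot_apply (k : ℤ) (P : Agr) (b : Ngrp) : (slot k P).coeff b = P.coeff ⟨b, ofAdd k⟩ :=
  Finsupp.comapDomain_apply _ _ _ _

lemma slot_zero (k : ℤ) : slot k (0 : Agr) = 0 := by
  ext b; rw [slot_apply]; rfl

lemma slot_add (k : ℤ) (P Q : Agr) : slot k (P + Q) = slot k P + slot k Q := by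
  ext b; rw [MonoidAlgebra.coeff_add, Finsupp.add_apply, slot_apply, slot_apply, slot_apply, MonoidAlgebra.coeff_add, Finsupp.add_apply]

noncomputable def slotHom (k : ℤ) : Agr →+ Rng :=
  { toFun := slot k, map_zero' := slot_zero k, map_add' := slot_add k }

lemma slot_eq (k : ℤ) (P : Agr) : slotHom k P = slot k P := rfl

lemma slot_sub (k : ℤ) (P Q : Agr) : slot k (P - Q) = slot k P - slot k Q := by
  rw [← slot_eq, ← slot_eq, ← slot_eq, map_sub]

lemma pair_eta (g : Hgrp) : (⟨g.left, ofAdd (toAdd g.right)⟩ : Hgrp) = g :=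
  SemidirectProduct.ext rfl (ofAdd_toAdd g.right)

lemma slot_all_zero (P : Agr) (h : ∀ k, slot k P = 0) : P = 0 := by
  ext g
  have h1 : P.coeff g = (slot (toAdd g.right) P).coeff g.left := by
    rw [slot_apply, pair_eta g]
  rw [h1, h (toAdd g.right)]
  rfl



lemma slot_single (k : ℤ) (g : Hgrp) (c : ℤ) :
    slot k (MonoidAlgebra.single g c)
      = if g.right = ofAdd k then MonoidAlgebra.single g.left c else 0 := by
  ext b
  rw [slot_apply]
  by_cases h : g.right = ofAdd k
  · rw [if_pos h]
    show (Finsupp.single g c) ⟨b, ofAdd k⟩ = (Finsupp.single g.left c) b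
    rw [Finsupp.single_apply, Finsupp.single_apply]
    congr 1
    simp only [eq_iff_iff]
    constructor
    · intro hh; exact congrArg SemidirectProduct.left hh
    · intro hh; exact SemidirectProduct.ext hh (by rw [h])
  · rw [if_neg h]
    show (Finsupp.single g c) ⟨b, ofAdd k⟩ = (0 : Rng).coeff b
    have hne : g ≠ (⟨b, ofAdd k⟩ : Hgrp) := fun hh => h (congrArg SemidirectProduct.right hh)
    rw [Finsupp.single_apply, if_neg hne]
    rfl
lemma slot_single_mul_single (k : ℤ) (g : Hgrp) (c : ℤ) (a : Hgrp) (b : ℤ) :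
    slot k (MonoidAlgebra.single g c * MonoidAlgebra.single a b)
      = MonoidAlgebra.single g.left c *
          Phi (· + toAdd g.right) (slot (k - toAdd g.right) (MonoidAlgebra.single a b)) := by
  rw [MonoidAlgebra.single_mul_single, slot_single, slot_single]
  by_cases h : a.right = ofAdd (k - toAdd g.right)
  · have hc : (g * a).right = ofAdd k := by
      rw [SemidirectProduct.mul_right, h, ← ofAdd_toAdd g.right, ← ofAdd_add]
      congr 1
      simp only [toAdd_ofAdd]
      omega
    have hs : (shiftHom g.right) a.left
        = ofAdd (Finsupp.mapDomain (· + toAdd g.right) a.left.toAdd) := by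
      conv_lhs => rw [← ofAdd_toAdd g.right]
      rw [shiftHom_apply']
    rw [if_pos hc, if_pos h, Phi_single, MonoidAlgebra.single_mul_single]
    congr 2
    rw [SemidirectProduct.mul_left, hs]
  · have hc : ¬ ((g * a).right = ofAdd k) := by
      intro hh
      rw [SemidirectProduct.mul_right] at hh
      apply h
      have h2 := congrArg toAdd hh
      rw [toAdd_mul, toAdd_ofAdd] at h2
      rw [← ofAdd_toAdd a.right]
      congr 1
      omega
    rw [if_neg hc, if_neg h, map_zero, mul_zero]

lemma slot_single_mul (k : ℤ) (g : Hgrp) (c : ℤ) (Q : Agr) :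
    slot k (MonoidAlgebra.single g c * Q)
      = MonoidAlgebra.single g.left c *
          Phi (· + toAdd g.right) (slot (k - toAdd g.right) Q) := by
  induction Q using MonoidAlgebra.induction with
  | zero => rw [mul_zero, slot_zero, slot_zero, map_zero, mul_zero]
  | single_add a b f _ _ ih =>
      rw [mul_add, slot_add, slot_add, map_add, mul_add, ih, slot_single_mul_single]

lemma slot_mul_single_single (k : ℤ) (a : Hgrp) (e : ℤ) (g : Hgrp) (c : ℤ) :
    slot k (MonoidAlgebra.single a e * MonoidAlgebra.single g c)
      = slot (k - toAdd g.right) (MonoidAlgebra.single a e) *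
          MonoidAlgebra.single ((shiftHom (ofAdd (k - toAdd g.right))) g.left) c := by
  rw [MonoidAlgebra.single_mul_single, slot_single, slot_single]
  by_cases h : a.right = ofAdd (k - toAdd g.right)
  · have hc : (a * g).right = ofAdd k := by
      rw [SemidirectProduct.mul_right, h, ← ofAdd_toAdd g.right, ← ofAdd_add]
      congr 1
      simp only [toAdd_ofAdd]
      omega
    rw [if_pos hc, if_pos h, MonoidAlgebra.single_mul_single]
    congr 2
    rw [SemidirectProduct.mul_left, h]
  · have hc : ¬ ((a * g).right = ofAdd k) := by
      intro hh
      rw [SemidirectProduct.mul_right] at hh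
      apply h
      have h2 := congrArg toAdd hh
      rw [toAdd_mul, toAdd_ofAdd] at h2
      rw [← ofAdd_toAdd a.right]
      congr 1
      omega
    rw [if_neg hc, if_neg h, zero_mul]

lemma slot_mul_single (k : ℤ) (P : Agr) (g : Hgrp) (c : ℤ) :
    slot k (P * MonoidAlgebra.single g c)
      = slot (k - toAdd g.right) P *
          MonoidAlgebra.single ((shiftHom (ofAdd (k - toAdd g.right))) g.left) c := by
  induction P using MonoidAlgebra.induction with
  | zero => rw [zero_mul, slot_zero, slot_zero, zero_mul]
  | single_add a b f _ _ ih =>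
      rw [add_mul, slot_add, slot_add, add_mul, ih, slot_mul_single_single]
lemma slot_TA_mul (k : ℤ) (U : Agr) :
    slot k (TA * U) = Phi (· + 1) (slot (k-1) U) := by
  rw [TA, MonoidAlgebra.of_apply, slot_single_mul]
  show MonoidAlgebra.single (1:Ngrp) 1 * _ = _
  rw [← MonoidAlgebra.one_def, one_mul]
  rfl

lemma hTX : TA * XA 0 = MonoidAlgebra.single
    (⟨ofAdd (Finsupp.single (1:ℤ) (1:ℤ)), ofAdd 1⟩ : Hgrp) 1 := by
  rw [TA, XA, MonoidAlgebra.of_apply, MonoidAlgebra.of_apply, MonoidAlgebra.single_mul_single,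
    mul_one]
  congr 1
  apply SemidirectProduct.ext
  · rw [SemidirectProduct.mul_left]
    show (1:Ngrp) * (shiftHom (ofAdd 1)) (ofAdd (Finsupp.single (0:ℤ) (1:ℤ))) = _
    rw [one_mul, shiftHom_apply', toAdd_ofAdd, Finsupp.mapDomain_single]
    norm_num
  · rw [SemidirectProduct.mul_right]
    show ofAdd 1 * (1 : Multiplicative ℤ) = ofAdd 1
    exact mul_one _

lemma slot_TX_mul (k : ℤ) (U : Agr) :
    slot k ((TA * XA 0) * U) = XR 1 * Phi (· + 1) (slot (k-1) U) := by
  rw [hTX, slot_single_mul]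
  rfl

lemma hTXT : tE ^ 2 * xE 0 * tE⁻¹ = (⟨ofAdd (Finsupp.single (2:ℤ) (1:ℤ)), ofAdd 1⟩ : Hgrp) := by
  rw [pow_two]
  apply SemidirectProduct.ext
  · simp only [SemidirectProduct.mul_left, SemidirectProduct.mul_right,
      SemidirectProduct.inv_left, SemidirectProduct.inv_right, tE, xE,
      SemidirectProduct.left_inr, SemidirectProduct.right_inr,
      SemidirectProduct.left_inl, SemidirectProduct.right_inl, inv_one, map_one, mul_one, one_mul]
    rw [show (ofAdd (1:ℤ) * ofAdd (1:ℤ)) = ofAdd (2:ℤ) by rw [← ofAdd_add]; norm_num]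
    rw [shiftHom_apply', toAdd_ofAdd, Finsupp.mapDomain_single]
    norm_num
  · simp only [SemidirectProduct.mul_right, SemidirectProduct.inv_right, tE, xE,
      SemidirectProduct.right_inr, SemidirectProduct.right_inl, mul_one]
    show ofAdd (1:ℤ) * ofAdd (1:ℤ) * (ofAdd (1:ℤ))⁻¹ = ofAdd 1
    group

lemma slot_TXT_mul (k : ℤ) (U : Agr) :
    slot k ((MonoidAlgebra.of ℤ Hgrp (tE ^ 2 * xE 0 * tE⁻¹)) * U)
      = XR 2 * Phi (· + 1) (slot (k-1) U) := by
  rw [MonoidAlgebra.of_apply, hTXT, slot_single_mul]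
  rfl

lemma slot_aElt (k : ℤ) (U : Agr) :
    slot k (aElt * U)
      = slot k U - Phi (· + 1) (slot (k-1) U) + XR 1 * Phi (· + 1) (slot (k-1) U) := by
  rw [aElt, add_mul, sub_mul, one_mul, slot_add, slot_sub, slot_TA_mul, slot_TX_mul]

lemma slot_bElt (k : ℤ) (V : Agr) :
    slot k (bElt * V)
      = slot k V - Phi (· + 1) (slot (k-1) V) + XR 2 * Phi (· + 1) (slot (k-1) V) := by
  rw [bElt, add_mul, sub_mul, one_mul, slot_add, slot_sub, slot_TA_mul, slot_TXT_mul]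

lemma Phi_shift_slot (k : ℤ) (w : Rng) :
    Phi (· - k) (Phi (· + 1) w) = Phi (· - (k-1)) w := by
  rw [Phi_comp]
  exact Phi_congr (fun x => by show x + 1 - k = x - (k-1); omega) w

/-- The normalized slot sequences. -/
noncomputable def nslot (k : ℤ) (P : Agr) : Rng := Phi (· - k) (slot k P)

lemma ker_rel {U V : Agr} (h : aElt * U = bElt * V) (k : ℤ) :
    nslot k U - nslot k V
      = yR (1-k) * nslot (k-1) U - yR (2-k) * nslot (k-1) V := by
  have e1 := congrArg (slot k) h
  rw [slot_aElt, slot_bElt] at e1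
  have e2 := congrArg (Phi (· - k)) e1
  rw [map_add, map_add, map_sub, map_sub, map_mul, map_mul, Phi_shift_slot, Phi_shift_slot,
    Phi_X, Phi_X] at e2
  show Phi (· - k) (slot k U) - Phi (· - k) (slot k V) = _
  rw [yR, yR, sub_mul, sub_mul, one_mul, one_mul]
  show _ = (Phi (· - (k-1)) (slot (k-1) U) - XR (1-k) * Phi (· - (k-1)) (slot (k-1) U))
    - (Phi (· - (k-1)) (slot (k-1) V) - XR (2-k) * Phi (· - (k-1)) (slot (k-1) V))
  have hx1 : (1 : ℤ) - k = 1 - k := rfl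
  linear_combination e2

lemma slot_vanish (P : Agr) (k : ℤ) (h : ∀ g ∈ P.coeff.support, toAdd g.right ≠ k) :
    slot k P = 0 := by
  ext b
  rw [slot_apply]
  show P.coeff ⟨b, ofAdd k⟩ = 0
  by_contra hnz
  exact h _ (Finsupp.mem_support_iff.mpr hnz) (by rfl)

/-- A bound for the `t`-support of an element. -/
noncomputable def tbound (P : Agr) : ℕ := P.coeff.support.sup fun g => (toAdd g.right).natAbs

lemma slot_vanish_of_bound (P : Agr) (k : ℤ) (h : (tbound P : ℤ) < |k|) : slot k P = 0 := by
  apply slot_vanish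
  intro g hg he
  have hle : (toAdd g.right).natAbs ≤ tbound P :=
    Finset.le_sup (f := fun g : Hgrp => (toAdd g.right).natAbs) hg
  rw [he] at hle
  rw [Int.abs_eq_natAbs] at h
  omega

lemma nslot_vanish_of_bound (P : Agr) (k : ℤ) (h : (tbound P : ℤ) < |k|) : nslot k P = 0 := by
  rw [nslot, slot_vanish_of_bound P k h, map_zero]
lemma ofAdd_single_ne (c d : ℤ) (h : c ≠ d) :
    (ofAdd (Finsupp.single c (1:ℤ)) : Ngrp) ≠ ofAdd (Finsupp.single d 1) := by
  intro hh
  have h2 : (Finsupp.single c (1:ℤ)) = Finsupp.single d 1 := congrArg toAdd hh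
  rcases (Finsupp.single_eq_single_iff _ _ _ _).mp h2 with ⟨h1,_⟩|⟨h1,_⟩
  · exact h h1
  · exact one_ne_zero h1

lemma XR_sub_ne (c d : ℤ) (h : c ≠ d) : XR c - XR d ≠ 0 := by
  intro hh
  have h0 : (XR c - XR d).coeff (ofAdd (Finsupp.single c (1:ℤ))) = (0:ℤ) := by rw [hh]; rfl
  rw [MonoidAlgebra.coeff_sub, Finsupp.sub_apply, XR, XR] at h0
  have e1 : (MonoidAlgebra.single (ofAdd (Finsupp.single c (1:ℤ))) (1:ℤ)).coeff
      (ofAdd (Finsupp.single c (1:ℤ))) = 1 := Finsupp.single_eq_same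
  have e2 : (MonoidAlgebra.single (ofAdd (Finsupp.single d (1:ℤ))) (1:ℤ)).coeff
      (ofAdd (Finsupp.single c (1:ℤ))) = 0 :=
    Finsupp.single_eq_of_ne' (ofAdd_single_ne d c (fun hh' => h hh'.symm))
  rw [e1, e2] at h0
  norm_num at h0

lemma yR_glue_ne (c : ℤ) : (1:Rng) - XR c ≠ 0 := by
  intro hh
  have h0 : ((1:Rng) - XR c).coeff (ofAdd (Finsupp.single c (1:ℤ))) = (0:ℤ) := by rw [hh]; rfl
  rw [MonoidAlgebra.coeff_sub, Finsupp.sub_apply] at h0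
  have e1 : (1:Rng).coeff (ofAdd (Finsupp.single c (1:ℤ))) = 0 := by
    rw [MonoidAlgebra.one_def]
    refine Finsupp.single_eq_of_ne' ?_
    intro hh'
    have h2 : (0 : ℤ →₀ ℤ) = Finsupp.single c 1 := congrArg toAdd hh'
    have h3 := congrArg (fun v : ℤ →₀ ℤ => v c) h2
    simp only [Finsupp.coe_zero, Pi.zero_apply, Finsupp.single_eq_same] at h3
    exact one_ne_zero h3.symm
  have e2 : (XR c).coeff (ofAdd (Finsupp.single c (1:ℤ))) = 1 := Finsupp.single_eq_same
  rw [e1, e2] at h0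
  norm_num at h0

lemma Phi_yR (f : ℤ → ℤ) (i : ℤ) : Phi f (yR i) = 1 - XR (f i) := by
  rw [yR, map_sub, map_one, Phi_X]

/-- The gluing map collapsing the pairs `(-j, 1-j)` for `j ∈ [-B,B] \ {k₀}`. -/
def glue (B k₀ : ℤ) : ℤ → ℤ := fun i =>
  if -B ≤ i ∧ i ≤ -k₀ then -k₀ else if 1-k₀ ≤ i ∧ i ≤ 1+B then 1-k₀ else i

lemma glue_pair (B k₀ j : ℤ) (h1 : -B ≤ j) (h2 : j ≤ B) (h3 : j ≠ k₀)
    (hk1 : -B ≤ k₀) (hk2 : k₀ ≤ B) :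
    glue B k₀ (1-j) = glue B k₀ (-j) := by
  unfold glue
  split_ifs <;> omega

lemma glue_fix1 (B k₀ : ℤ) (hk1 : -B ≤ k₀) (hk2 : k₀ ≤ B) : glue B k₀ (-k₀) = -k₀ := by
  unfold glue; split_ifs <;> omega

lemma glue_fix2 (B k₀ : ℤ) (hk1 : -B ≤ k₀) (hk2 : k₀ ≤ B) : glue B k₀ (1-k₀) = 1-k₀ := by
  unfold glue; split_ifs <;> omega

lemma core (p q : ℤ → Rng) (B k₀ : ℤ) (hk1 : -B ≤ k₀) (hk2 : k₀ ≤ B)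
    (hvp : ∀ k : ℤ, k < -B ∨ B < k → p k = 0) (hvq : ∀ k : ℤ, k < -B ∨ B < k → q k = 0)
    (hrel : ∀ k : ℤ, p k - q k = yR (1-k) * p (k-1) - yR (2-k) * q (k-1)) :
    Phi (glue B k₀) (q k₀) = 0 := by
  set π := Phi (glue B k₀) with hπ
  have hyne : ∀ i : ℤ, π (yR i) ≠ 0 := fun i => by rw [hπ, Phi_yR]; exact yR_glue_ne _
  have hglue : ∀ j : ℤ, -B ≤ j → j ≤ B → j ≠ k₀ → π (yR (-j)) = π (yR (1-j)) := by
    intro j h1 h2 h3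
    rw [hπ, Phi_yR, Phi_yR, glue_pair B k₀ j h1 h2 h3 hk1 hk2]
  have hrelπ : ∀ k : ℤ, π (p (k+1)) - π (q (k+1))
      = π (yR (-k)) * π (p k) - π (yR (1-k)) * π (q k) := by
    intro k
    have hr := congrArg π (hrel (k+1))
    rw [map_sub, map_sub, map_mul, map_mul,
      show (1:ℤ)-(k+1) = -k by omega, show (2:ℤ)-(k+1) = 1-k by omega,
      show k+1-1 = k by omega] at hr
    exact hr
  have hstep : ∀ k : ℤ, k₀ < k → k ≤ B → π (p (k+1)) = π (q (k+1)) → π (p k) = π (q k) := by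
    intro k hgt hle hprev
    have hr := hrelπ k
    rw [hprev, sub_self, ← hglue k (by omega) hle (by omega)] at hr
    have hz : π (yR (-k)) * (π (p k) - π (q k)) = 0 := by
      rw [mul_sub]
      linear_combination -hr
    rcases mul_eq_zero.mp hz with h'|h'
    · exact absurd h' (hyne _)
    · exact sub_eq_zero.mp h'
  have down : ∀ d : ℕ, ∀ k : ℤ, k = B - (d:ℤ) → k₀ < k → π (p k) = π (q k) := by
    intro d
    induction d with
    | zero =>
      intro k hkd hgt
      apply hstep k hgt (by omega)
      rw [hvp _ (Or.inr (by omega)), hvq _ (Or.inr (by omega))]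
    | succ d ih =>
      intro k hkd hgt
      apply hstep k hgt (by push_cast at hkd; omega)
      by_cases hc : k₀ < k + 1
      · exact ih (k+1) (by push_cast at hkd ⊢; omega) hc
      · omega
  have hstep_up : ∀ k : ℤ, k ≤ k₀ → π (p (k-1)) = π (q (k-1)) → π (p k) = π (q k) := by
    intro k hle hprev
    have hr := congrArg π (hrel k)
    rw [map_sub, map_sub, map_mul, map_mul, hprev] at hr
    by_cases hlow : k - 1 < -B
    · rw [hvq _ (Or.inl hlow), map_zero, mul_zero, mul_zero, sub_self] at hr
      exact sub_eq_zero.mp hr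
    · have hco := hglue (k-1) (by omega) (by omega) (by omega)
      rw [show (1:ℤ)-k = -(k-1) by omega, show (2:ℤ)-k = 1-(k-1) by omega, ← hco, sub_self] at hr
      exact sub_eq_zero.mp hr
  have up : ∀ d : ℕ, ∀ k : ℤ, k = -B - 1 + (d:ℤ) → k ≤ k₀ → π (p k) = π (q k) := by
    intro d
    induction d with
    | zero =>
      intro k hkd _
      rw [hvp _ (Or.inl (by omega)), hvq _ (Or.inl (by omega))]
    | succ d ih =>
      intro k hkd hle
      exact hstep_up k hle (ih (k-1) (by push_cast at hkd ⊢; omega) (by omega))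
  have hup : π (p k₀) = π (q k₀) :=
    up (k₀ + B + 1).toNat k₀ (by rw [Int.toNat_of_nonneg (by omega)]; omega) le_rfl
  have hdown : π (p (k₀+1)) = π (q (k₀+1)) := by
    by_cases hbc : B < k₀ + 1
    · rw [hvp _ (Or.inr hbc), hvq _ (Or.inr hbc)]
    · exact down (B - (k₀+1)).toNat (k₀+1) (by rw [Int.toNat_of_nonneg (by omega)]; omega)
        (by omega)
  have hr := hrelπ k₀
  rw [hdown, sub_self, hup] at hr
  have hz : (π (yR (-k₀)) - π (yR (1-k₀))) * π (q k₀) = 0 := by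
    rw [sub_mul]
    linear_combination -hr
  rcases mul_eq_zero.mp hz with h'|h'
  · exfalso
    rw [hπ, Phi_yR, Phi_yR, glue_fix1 B k₀ hk1 hk2, glue_fix2 B k₀ hk1 hk2] at h'
    apply XR_sub_ne (1-k₀) (-k₀) (by omega)
    linear_combination h'
  · exact h'
/-- The big gluing map collapsing all of `[-C, C]` to `0`. -/
def gC (C : ℤ) : ℤ → ℤ := fun i => if -C ≤ i ∧ i ≤ C then 0 else i

lemma main_vanish {U V : Agr} (h : aElt * U = bElt * V) (β : ℕ)
    (hU : tbound U ≤ β) (hV : tbound V ≤ β) (C : ℤ) (hC : 2*(β:ℤ) + 1 ≤ C) (k : ℤ) :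
    Phi (gC C) (slot k V) = 0 := by
  by_cases hk : |k| ≤ (β:ℤ)
  · obtain ⟨hk1, hk2⟩ := abs_le.mp hk
    have hvan : ∀ (P : Agr), tbound P ≤ β → ∀ j : ℤ, j < -(β:ℤ) ∨ (β:ℤ) < j → nslot j P = 0 := by
      intro P hP j hj
      apply nslot_vanish_of_bound
      have habs : (β:ℤ) < |j| := by
        rcases hj with h'|h'
        · exact lt_of_lt_of_le (by omega) (neg_le_abs j)
        · exact lt_of_lt_of_le h' (le_abs_self j)
      have hcast : ((tbound P : ℤ)) ≤ (β:ℤ) := by exact_mod_cast hP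
      exact lt_of_le_of_lt hcast habs
    have hcore := core (fun j => nslot j U) (fun j => nslot j V) (β:ℤ) k hk1 hk2
      (hvan U hU) (hvan V hV) (fun j => ker_rel h j)
    have hsl : slot k V = Phi (· + k) (nslot k V) := by
      rw [nslot, Phi_comp]
      exact (Phi_id _ (fun x => by show x - k + k = x; omega) (slot k V)).symm
    rw [hsl, Phi_comp]
    have hcongr : Phi ((gC C) ∘ (· + k)) (nslot k V)
        = Phi (((gC C) ∘ (· + k)) ∘ glue (β:ℤ) k) (nslot k V) := by
      apply Phi_congr
      intro i
      show gC C (i + k) = gC C (glue (β:ℤ) k i + k)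
      unfold glue gC
      split_ifs <;> omega
    rw [hcongr, ← Phi_comp, hcore, map_zero]
  · push_neg at hk
    have hcast : ((tbound V : ℤ)) ≤ (β:ℤ) := by exact_mod_cast hV
    rw [slot_vanish_of_bound V k (lt_of_le_of_lt hcast hk), map_zero]
noncomputable def emb (k : ℤ) (r : Rng) : Agr :=
  MonoidAlgebra.mapDomain (fun b : Ngrp => (⟨b, ofAdd k⟩ : Hgrp)) r

lemma slot_emb_same (k : ℤ) (r : Rng) : slot k (emb k r) = r := by
  ext b
  rw [slot_apply, emb, MonoidAlgebra.mapDomain, MonoidAlgebra.coeff_ofCoeff, Finsupp.mapDomain_apply (fun a b h => congrArg SemidirectProduct.left h)]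

lemma slot_emb_ne (j k : ℤ) (r : Rng) (h : j ≠ k) : slot j (emb k r) = 0 := by
  ext b
  rw [slot_apply, emb, MonoidAlgebra.mapDomain, MonoidAlgebra.coeff_ofCoeff]
  have hnot : (⟨b, ofAdd j⟩ : Hgrp) ∉ Set.range (fun b : Ngrp => (⟨b, ofAdd k⟩ : Hgrp)) := by
    rintro ⟨a, ha⟩
    have h2 : (ofAdd k : Multiplicative ℤ) = ofAdd j := congrArg SemidirectProduct.right ha
    exact h (congrArg toAdd h2).symm
  rw [Finsupp.mapDomain_notin_range r.coeff _ hnot]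
  rfl

lemma slot_sum_emb (m : ℕ) (F : ℕ → Rng) (j : ℤ) :
    slot j (∑ k ∈ Finset.range m, emb (k:ℤ) (F k))
      = if 0 ≤ j ∧ j < (m:ℤ) then F j.toNat else 0 := by
  rw [← slot_eq, map_sum]
  by_cases h : 0 ≤ j ∧ j < (m:ℤ)
  · rw [if_pos h]
    rw [Finset.sum_eq_single j.toNat]
    · rw [slot_eq, show ((j.toNat:ℕ):ℤ) = j from Int.toNat_of_nonneg h.1, slot_emb_same]
    · intro b _ hne
      rw [slot_eq]
      exact slot_emb_ne _ _ _ (fun he => hne (by omega))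
    · intro hnotmem
      exact absurd (Finset.mem_range.mpr (by omega)) hnotmem
  · rw [if_neg h]
    apply Finset.sum_eq_zero
    intro b hb
    rw [Finset.mem_range] at hb
    rw [slot_eq]
    exact slot_emb_ne _ _ _ (fun he => h (by omega))

noncomputable def Yp : ℕ → Rng
  | 0 => 1
  | j+1 => Yp j * yR (-(j:ℤ))

lemma Yp_succ_int (m : ℤ) (h : 1 ≤ m) : Yp m.toNat = Yp (m-1).toNat * yR (1 - m) := by
  have h1 : m.toNat = (m-1).toNat + 1 := by omega
  rw [h1]
  simp only [Yp]
  have h2 : (((m-1).toNat:ℕ):ℤ) = m-1 := Int.toNat_of_nonneg (by omega)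
  rw [h2]
  ring_nf

noncomputable def pG (n : ℕ) : ℤ → Rng := fun k =>
  if k = 0 then zR (-(n:ℤ))
  else if k = (n:ℤ)+1 then -(zR 1 * Yp (n+1))
  else 0

noncomputable def qG (n : ℕ) : ℤ → Rng := fun k =>
  if k = 0 then zR (-(n:ℤ))
  else if 1 ≤ k ∧ k ≤ (n:ℤ) then zR (-(n:ℤ)) * zR 1 * Yp (k-1).toNat
  else if k = (n:ℤ)+1 then -(zR 1 * Yp n * yR (-(n:ℤ)-1))
  else 0

lemma zyy (i : ℤ) : zR i = yR i - yR (i-1) := by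
  rw [zR, yR, yR]
  ring
lemma relG (n : ℕ) (k : ℤ) :
    pG n k - qG n k = yR (1-k) * pG n (k-1) - yR (2-k) * qG n (k-1) := by
  unfold pG qG
  split_ifs <;> first
    | (exfalso; omega)
    | ring
    | skip
  · -- n = 0, k = 1
    have hn : n = 0 := by omega
    subst hn
    have hk : k = 1 := by omega
    subst hk
    have e1 : Yp (1 + 0) = yR 0 := by
      show Yp (0 + 1) = yR 0
      simp only [Yp]
      norm_num
    have e0 : Yp 0 = (1:Rng) := rfl
    rw [e1, e0]
    simp only [zyy]
    push_cast
    ring_nf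
  · -- k = n+1, n ≥ 1
    have hk : k = (n:ℤ)+1 := by omega
    subst hk
    have h1 : (1:ℤ) ≤ (n:ℤ) := by omega
    rw [Nat.add_comm 1 n]
    simp only [Yp]
    rw [show Yp n = Yp ((n:ℤ)).toNat by simp]
    rw [Yp_succ_int (n:ℤ) h1]
    simp only [zyy]
    ring_nf
  · -- k = 1, n ≥ 1
    have hk : k = 1 := by omega
    subst hk
    norm_num
    simp only [Yp, zyy]
    ring_nf
  · -- 2 ≤ k ≤ n
    rw [show (-1 + k).toNat = (-2 + k).toNat + 1 by omega]
    simp only [Yp]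
    rw [show (((-2 + k).toNat:ℕ):ℤ) = -2 + k from Int.toNat_of_nonneg (by omega)]
    ring_nf
  · -- k = n+2
    have hk : k = (n:ℤ)+2 := by omega
    subst hk
    rw [Nat.add_comm 1 n]
    simp only [Yp]
    ring_nf
noncomputable def GU (n : ℕ) : Agr :=
  ∑ k ∈ Finset.range (n+2), emb (k:ℤ) (Phi (· + (k:ℤ)) (pG n (k:ℤ)))

noncomputable def GV (n : ℕ) : Agr :=
  ∑ k ∈ Finset.range (n+2), emb (k:ℤ) (Phi (· + (k:ℤ)) (qG n (k:ℤ)))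

lemma pG_out (n : ℕ) (j : ℤ) (h : ¬ (0 ≤ j ∧ j < (n:ℤ)+2)) : pG n j = 0 := by
  unfold pG
  split_ifs <;> first | rfl | (exfalso; omega)

lemma qG_out (n : ℕ) (j : ℤ) (h : ¬ (0 ≤ j ∧ j < (n:ℤ)+2)) : qG n j = 0 := by
  unfold qG
  split_ifs <;> first | rfl | (exfalso; omega)

lemma qG_zero (n : ℕ) : qG n 0 = zR (-(n:ℤ)) := by
  unfold qG
  norm_num

lemma slot_GU (n : ℕ) (j : ℤ) : slot j (GU n) = Phi (· + j) (pG n j) := by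
  rw [GU, slot_sum_emb]
  by_cases h : 0 ≤ j ∧ j < ((n+2:ℕ):ℤ)
  · rw [if_pos h, show ((j.toNat:ℕ):ℤ) = j from Int.toNat_of_nonneg h.1]
  · rw [if_neg h, pG_out n j (by push_cast at h; omega), map_zero]

lemma slot_GV (n : ℕ) (j : ℤ) : slot j (GV n) = Phi (· + j) (qG n j) := by
  rw [GV, slot_sum_emb]
  by_cases h : 0 ≤ j ∧ j < ((n+2:ℕ):ℤ)
  · rw [if_pos h, show ((j.toNat:ℕ):ℤ) = j from Int.toNat_of_nonneg h.1]
  · rw [if_neg h, qG_out n j (by push_cast at h; omega), map_zero]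

lemma Phi_comp_shift (k : ℤ) (r : Rng) :
    Phi (· + (1:ℤ)) (Phi (· + (k-1)) r) = Phi (· + k) r := by
  rw [Phi_comp]
  exact Phi_congr (fun x => by show x + (k-1) + 1 = x + k; omega) r

lemma GG_ker (n : ℕ) : aElt * GU n = bElt * GV n := by
  have hs : ∀ k, slot k (aElt * GU n - bElt * GV n) = 0 := by
    intro k
    rw [slot_sub, slot_aElt, slot_bElt, slot_GU, slot_GU, slot_GV, slot_GV,
      Phi_comp_shift, Phi_comp_shift]
    have h := congrArg (Phi (· + k)) (relG n k)
    rw [map_sub, map_sub, map_mul, map_mul, Phi_yR, Phi_yR,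
      show (1:ℤ)-k+k = 1 by ring, show (2:ℤ)-k+k = 2 by ring] at h
    linear_combination h
  exact sub_eq_zero.mp (slot_all_zero _ hs)

lemma slot0_GV (n : ℕ) : slot 0 (GV n) = zR (-(n:ℤ)) := by
  rw [slot_GV, qG_zero]
  exact Phi_id _ (fun x => by show x + 0 = x; omega) _
end WreathAux

open WreathAux in
/-- The kernel `K` of `f` is not finitely generated as a right
`ℤ[H]`-module. -/
theorem ker_not_fg : ¬ (LinearMap.ker fMap).FG := by
  rintro ⟨S, hS⟩
  classical
  set β : ℕ := S.sup (fun s => max (tbound s.1) (tbound s.2)) with hβ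
  set C : ℤ := 2*(β:ℤ)+1 with hC
  let M : Submodule Agrᵐᵒᵖ (Agr × Agr) :=
    { carrier := {w | ∀ d : Agr, Phi (gC C) (slot 0 (w.2 * d)) = 0}
      add_mem' := by
        intro a b ha hb d
        show Phi (gC C) (slot 0 ((a + b).2 * d)) = 0
        rw [show (a + b).2 = a.2 + b.2 from rfl, add_mul, slot_add, map_add, ha d, hb d, add_zero]
      zero_mem' := by
        intro d
        show Phi (gC C) (slot 0 ((0 : Agr × Agr).2 * d)) = 0
        rw [show ((0 : Agr × Agr)).2 = (0:Agr) from rfl, zero_mul, slot_zero, map_zero]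
      smul_mem' := by
        intro c w hw d
        show Phi (gC C) (slot 0 ((c • w).2 * d)) = 0
        rw [Prod.smul_snd, MulOpposite.smul_eq_mul_unop, mul_assoc]
        exact hw (c.unop * d) }
  have hSM : ∀ s ∈ S, s ∈ M := by
    intro s hs
    have hsker : s ∈ LinearMap.ker fMap := by
      rw [← hS]
      exact Submodule.subset_span hs
    have hab : aElt * s.1 = bElt * s.2 := by
      have h0 : aElt * s.1 - bElt * s.2 = 0 := LinearMap.mem_ker.mp hsker
      exact sub_eq_zero.mp h0
    have hb1 : tbound s.1 ≤ β :=
      le_trans (le_max_left _ _) (Finset.le_sup (f := fun s => max (tbound s.1) (tbound s.2)) hs)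
    have hb2 : tbound s.2 ≤ β :=
      le_trans (le_max_right _ _) (Finset.le_sup (f := fun s => max (tbound s.1) (tbound s.2)) hs)
    show ∀ d : Agr, Phi (gC C) (slot 0 (s.2 * d)) = 0
    intro d
    induction d using MonoidAlgebra.induction with
    | zero => rw [mul_zero, slot_zero, map_zero]
    | single_add g c f hg hc ih =>
      rw [mul_add, slot_add, map_add, ih, add_zero, slot_mul_single, map_mul,
        main_vanish hab β hb1 hb2 C (by omega) (0 - toAdd g.right), zero_mul]
  have hspan : LinearMap.ker fMap ≤ M := by
    rw [← hS]
    exact Submodule.span_le.mpr (fun s hs => hSM s hs)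
  set n : ℕ := C.toNat + 1 with hn
  have hGker : ((GU n, GV n) : Agr × Agr) ∈ LinearMap.ker fMap := by
    rw [LinearMap.mem_ker]
    show aElt * GU n - bElt * GV n = 0
    rw [GG_ker n, sub_self]
  have hval : Phi (gC C) (slot 0 (GV n * 1)) = 0 := hspan hGker 1
  rw [mul_one, slot0_GV] at hval
  have hnz : Phi (gC C) (zR (-(n:ℤ))) ≠ 0 := by
    rw [zR, map_sub, Phi_X, Phi_X]
    have hCpos : 0 ≤ C := by omega
    have hnC : (n:ℤ) = C + 1 := by omega
    have g1 : gC C (-(n:ℤ)-1) = -(n:ℤ)-1 := by unfold gC; split_ifs <;> omega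
    have g2 : gC C (-(n:ℤ)) = -(n:ℤ) := by unfold gC; split_ifs <;> omega
    rw [g1, g2]
    exact XR_sub_ne _ _ (by omega)
  exact hnz hval
end
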